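/- Let H be a Hopf k-algebra, A a quasi partial H-comodule algebra, B → A^{coH} a ring morphism, and suppose A/B is a partial Hopf-Galois extension (i.e. the canonical map can : A ⊗_B A → A•H, a ⊗ a' ↦ (a•1_H)ρ_A(a'), is bijective). Then the functor − ⊗_B A : Mod_B → PMod_A^H is fully faithful if and only if ι : B → A is pure as a left B-module morphism; and in that case B ≅ A^{coH}. -/

import Mathlib

open TensorProduct

universe u

section Defs

variable (k : Type u) [Field k]

/-- The map `X ⊗ ε : X ⊗ H → X` (composed with `X ⊗ k ≅ X`). -/
noncomputable def epsMap (X H : Type u) [AddCommGroup H] [Module k H] [Coalgebra k H]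
    [AddCommGroup X] [Module k X] : X ⊗[k] H →ₗ[k] X :=
  (TensorProduct.rid k X).toLinearMap ∘ₗ
    LinearMap.lTensor X (Coalgebra.counit : H →ₗ[k] k)

/-- The map `X ⊗ Δ` followed by reassociation, `X ⊗ H → (X ⊗ H) ⊗ H`. -/
noncomputable def deltaMap (X H : Type u) [AddCommGroup H] [Module k H] [Coalgebra k H]
    [AddCommGroup X] [Module k X] : X ⊗[k] H →ₗ[k] (X ⊗[k] H) ⊗[k] H :=
  (TensorProduct.assoc k X H H).symm.toLinearMap ∘ₗ
    LinearMap.lTensor X (Coalgebra.comul : H →ₗ[k] H ⊗[k] H)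

/-- `(X, X•H, π, ρ)` is a quasi partial `H`-comodule: `π` is surjective, [QPC1]
counitality holds (via the induced map `X•ε`), and [QPC2] coassociativity holds in
the coassociativity pushout `Θ = ((X•H) ⊗ H)/(K + L)`. -/
noncomputable def IsQuasiPartialComodule {X XbH H : Type u}
    [AddCommGroup H] [Module k H] [Coalgebra k H]
    [AddCommGroup X] [Module k X] [AddCommGroup XbH] [Module k XbH]
    (π : X ⊗[k] H →ₗ[k] XbH) (ρ : X →ₗ[k] XbH) : Prop :=
  Function.Surjective π ∧
  (∃ c : XbH →ₗ[k] X, c ∘ₗ π = epsMap k X H ∧ c ∘ₗ ρ = LinearMap.id) ∧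
  (∀ (x : X) (u : X ⊗[k] H), π u = ρ x →
    TensorProduct.map ρ (LinearMap.id : H →ₗ[k] H) u -
      TensorProduct.map π (LinearMap.id : H →ₗ[k] H) (deltaMap k X H u) ∈
    Submodule.map (TensorProduct.map ρ (LinearMap.id : H →ₗ[k] H)) (LinearMap.ker π) ⊔
    Submodule.map (TensorProduct.map π (LinearMap.id : H →ₗ[k] H) ∘ₗ deltaMap k X H)
      (LinearMap.ker π))

variable {H A M : Type u} [Ring H] [HopfAlgebra k H]
  [AddCommGroup M] [Module k M] [Ring A] [Algebra k A]

/-- The right `A`-action on `M` as a map `M ⊗ A → M`. -/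
noncomputable def actLin (actM : M →ₗ[k] A →ₗ[k] M) : M ⊗[k] A →ₗ[k] M :=
  TensorProduct.lift actM

/-- The `A ⊗ H`-action on `M ⊗ H`: `(m ⊗ h)·(a ⊗ h') = ma ⊗ hh'`. -/
noncomputable def muMH (actM : M →ₗ[k] A →ₗ[k] M) :
    (M ⊗[k] H) ⊗[k] (A ⊗[k] H) →ₗ[k] M ⊗[k] H :=
  TensorProduct.map (actLin k actM) (LinearMap.mul' k H) ∘ₗ
    (TensorProduct.tensorTensorTensorComm k M H A H).toLinearMap

/-- The map `M ⊗ (A ⊗ H) → M ⊗ H`, `m ⊗ (a ⊗ h) ↦ ma ⊗ h`. -/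
noncomputable def act2 (actM : M →ₗ[k] A →ₗ[k] M) :
    M ⊗[k] (A ⊗[k] H) →ₗ[k] M ⊗[k] H :=
  TensorProduct.map (actLin k actM) (LinearMap.id : H →ₗ[k] H) ∘ₗ
    (TensorProduct.assoc k M A H).symm.toLinearMap

end Defs

/-! The Galois map `can` identifies `A ⊗_B A` with `A•H`, sending `a ⊗ 1` to `π_A(a ⊗ 1)` and
`1 ⊗ a` to `ρ_A(a)`. After tensoring with `N`, the coinvariants of `N ⊗_B A` therefore form the
equalizer of `n ⊗ a ↦ n ⊗ a ⊗ 1` and `n ⊗ a ↦ n ⊗ 1 ⊗ a`, and the theorem reduces to the descent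
fact that for a pure `B → A` this equalizer is `N`: the map `N ⊗ A ⊗ A → ((N ⊗ A)/N) ⊗ A`,
`n ⊗ a ⊗ a' ↦ [n ⊗ a] ⊗ a'`, kills the second map and turns the first into `ξ ↦ [ξ] ⊗ 1`, which is
injective by purity. -/

section Purity

variable (B A : Type u) [CommRing B] [Ring A] [Algebra B A]

def AlgebraMapIsPure : Prop :=
  ∀ (P : Type u) [AddCommGroup P] [Module B P],
    Function.Injective (fun p : P => (p ⊗ₜ[B] (1 : A) : P ⊗[B] A))

variable {B A}

theorem AlgebraMapIsPure.mem_of_mkQ_tmul_one_eq_zero (hpure : AlgebraMapIsPure B A)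
    {M : Type u} [AddCommGroup M] [Module B M] {S : Submodule B M} {x : M}
    (h : S.mkQ x ⊗ₜ[B] (1 : A) = 0) : x ∈ S := by
  rw [← Submodule.Quotient.mk_eq_zero, ← Submodule.mkQ_apply]
  exact hpure _ (h.trans (TensorProduct.zero_tmul _ _).symm)

theorem AlgebraMapIsPure.injective_algebraMap (hpure : AlgebraMapIsPure B A) :
    Function.Injective (algebraMap B A) := by
  intro b b' h
  apply hpure B
  apply (TensorProduct.lid B A).injective
  simpa [Algebra.smul_def] using h

theorem AlgebraMapIsPure.exists_tmul_one_eq (hpure : AlgebraMapIsPure B A)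
    {N : Type u} [AddCommGroup N] [Module B N] {ξ : N ⊗[B] A}
    (hξ : LinearMap.lTensor N ((TensorProduct.mk B A A).flip 1) ξ =
      LinearMap.lTensor N (TensorProduct.mk B A A 1) ξ) :
    ∃ n : N, n ⊗ₜ[B] (1 : A) = ξ := by
  let S := LinearMap.range ((TensorProduct.mk B N A).flip 1)
  let φ := LinearMap.rTensor A S.mkQ ∘ₗ (TensorProduct.assoc B N A A).symm.toLinearMap
  have hφr : φ ∘ₗ LinearMap.lTensor N ((TensorProduct.mk B A A).flip 1) =
      (TensorProduct.mk B (N ⊗[B] A ⧸ S) A).flip 1 ∘ₗ S.mkQ := by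
    ext n a
    simp [φ]
  have hφl : φ ∘ₗ LinearMap.lTensor N (TensorProduct.mk B A A 1) = 0 := by
    ext n a
    have hn : S.mkQ (n ⊗ₜ[B] (1 : A)) = 0 :=
      (Submodule.Quotient.mk_eq_zero S).mpr ⟨n, rfl⟩
    simp [φ, hn]
  have hq : S.mkQ ξ ⊗ₜ[B] (1 : A) = 0 := by
    simpa using (LinearMap.congr_fun hφr ξ).symm.trans
      ((congrArg φ hξ).trans (LinearMap.congr_fun hφl ξ))
  exact hpure.mem_of_mkQ_tmul_one_eq_zero hq

theorem AlgebraMapIsPure.mem_range_of_tmul_one_eq_one_tmul (hpure : AlgebraMapIsPure B A)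
    {a : A} (ha : a ⊗ₜ[B] (1 : A) = (1 : A) ⊗ₜ[B] a) : a ∈ Set.range (algebraMap B A) := by
  obtain ⟨b, hb⟩ := hpure.exists_tmul_one_eq (N := B) (ξ := (1 : B) ⊗ₜ[B] a) (by simp [ha])
  refine ⟨b, ?_⟩
  simpa [Algebra.smul_def] using congrArg (TensorProduct.lid B A) hb

end Purity

theorem galois_fullyFaithful_iff_pure_general
    {k H A AbH : Type u} [Field k] [Ring H] [HopfAlgebra k H]
    [Ring A] [Algebra k A] [AddCommGroup AbH] [Module k AbH]
    {B : Type u} [CommRing B] [Algebra B A]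
    [Module B AbH]
    (πA : A ⊗[k] H →ₗ[k] AbH) (ρA : A →ₗ[k] AbH)
    -- `A` is a quasi partial `H`-comodule algebra:
    (mulAbH : AbH →ₗ[k] AbH →ₗ[k] AbH)
    (hmul : ∀ (a a' : A) (h h' : H),
      mulAbH (πA (a ⊗ₜ h)) (πA (a' ⊗ₜ h')) = πA ((a * a') ⊗ₜ (h * h')))
    (hone : ρA 1 = πA (1 ⊗ₜ 1))
    (hρmul : ∀ a a' : A, ρA (a * a') = mulAbH (ρA a) (ρA a'))
    -- `B → A` lands in the coinvariants `A^{coH}`: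
    (hB : ∀ b : B, ρA (algebraMap B A b) = πA (algebraMap B A b ⊗ₜ 1))
    -- `B`-linear incarnations of `ρ_A` and of `a ↦ π_A(a ⊗ 1_H)`:
    (ρA' : A →ₗ[B] AbH) (hρA' : ∀ a : A, ρA' a = ρA a)
    (πA1 : A →ₗ[B] AbH) (hπA1 : ∀ a : A, πA1 a = πA (a ⊗ₜ 1))
    -- `A/B` is a partial `H`-Galois extension:
    (can : A ⊗[B] A →ₗ[B] AbH)
    (hcan : ∀ a a' : A, can (a ⊗ₜ a') = mulAbH (πA (a ⊗ₜ 1)) (ρA a'))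
    (hGalois : Function.Bijective can) :
    -- purity of `ι : B → A` ⟺ `− ⊗_B A` fully faithful (unit bijective on coinvariants)
    ((∀ (P : Type u) [AddCommGroup P] [Module B P],
        Function.Injective (fun p : P => (p ⊗ₜ[B] (1 : A) : P ⊗[B] A))) ↔
      (∀ (N : Type u) [AddCommGroup N] [Module B N],
        Set.BijOn (fun n : N => (n ⊗ₜ[B] (1 : A) : N ⊗[B] A)) Set.univ
          {ξ : N ⊗[B] A |
            LinearMap.lTensor N ρA' ξ = LinearMap.lTensor N πA1 ξ})) ∧
    -- and purity implies `B ≅ A^{coH}`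
    ((∀ (P : Type u) [AddCommGroup P] [Module B P],
        Function.Injective (fun p : P => (p ⊗ₜ[B] (1 : A) : P ⊗[B] A))) →
      Set.BijOn (algebraMap B A) Set.univ
        {a : A | ρA a = πA (a ⊗ₜ 1)}) := by
  have can_tmul_one (a : A) : can (a ⊗ₜ 1) = πA1 a := by simp [hcan, hone, hmul, hπA1]
  have can_one_tmul (a : A) : can (1 ⊗ₜ a) = ρA' a := by
    simp [hcan, ← hone, ← hρmul, hρA']
  have can_comp_tmul_one : can ∘ₗ (TensorProduct.mk B A A).flip 1 = πA1 :=
    LinearMap.ext can_tmul_one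
  have can_comp_one_tmul : can ∘ₗ TensorProduct.mk B A A 1 = ρA' := LinearMap.ext can_one_tmul
  refine ⟨⟨fun hpure N _ _ => ?_, fun hff P _ _ => Set.injOn_univ.mp (hff P).injOn⟩,
    fun hpure => ⟨fun b _ => hB b, AlgebraMapIsPure.injective_algebraMap hpure |>.injOn,
      fun a ha => ?_⟩⟩
  · refine ⟨fun n _ => by simp [hρA', hπA1, hone], fun n _ n' _ h => hpure N h,
      fun ξ hξ => ?_⟩
    have can_lTensor_injective : Function.Injective (LinearMap.lTensor N can) :=
      ((LinearEquiv.ofBijective can hGalois).lTensor N).injective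
    have hξ' : LinearMap.lTensor N ((TensorProduct.mk B A A).flip 1) ξ =
        LinearMap.lTensor N (TensorProduct.mk B A A 1) ξ := by
      apply can_lTensor_injective
      rw [← LinearMap.lTensor_comp_apply, ← LinearMap.lTensor_comp_apply, can_comp_tmul_one,
        can_comp_one_tmul]
      exact hξ.symm
    obtain ⟨n, hn⟩ := AlgebraMapIsPure.exists_tmul_one_eq hpure hξ'
    exact ⟨n, trivial, hn⟩
  · obtain ⟨b, hb⟩ := AlgebraMapIsPure.mem_range_of_tmul_one_eq_one_tmul hpure (a := a) <|
      hGalois.injective <| by rw [can_tmul_one, can_one_tmul, hπA1, hρA', ← ha]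
    exact ⟨b, trivial, hb⟩

/-- Let `A` be a quasi partial `H`-comodule algebra, `B → A^{coH}` a ring morphism,
and suppose `A/B` is a partial Hopf–Galois extension, i.e. the canonical map
`can : A ⊗_B A → A•H`, `a ⊗ a' ↦ (a•1_H)·ρ_A(a')`, is bijective. Then the functor
`− ⊗_B A : Mod_B → PMod_A^H` is fully faithful (equivalently, by the adjunction
`− ⊗_B A ⊣ (−)^{coH}`, the unit `ν_N : N → (N ⊗_B A)^{coH}`, `n ↦ n ⊗ 1_A`, is
bijective for every `B`-module `N`) if and only if `ι : B → A` is pure as a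
left `B`-module morphism; and in that case `B ≅ A^{coH}`. -/
theorem galois_fullyFaithful_iff_pure
    {k H A AbH : Type u} [Field k] [Ring H] [HopfAlgebra k H]
    [Ring A] [Algebra k A] [AddCommGroup AbH] [Module k AbH]
    {B : Type u} [CommRing B] [Algebra k B] [Algebra B A] [IsScalarTower k B A]
    [Module B AbH]
    (πA : A ⊗[k] H →ₗ[k] AbH) (ρA : A →ₗ[k] AbH)
    (hA : IsQuasiPartialComodule k πA ρA)
    -- `A` is a quasi partial `H`-comodule algebra:
    (mulAbH : AbH →ₗ[k] AbH →ₗ[k] AbH)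
    (hmul : ∀ (a a' : A) (h h' : H),
      mulAbH (πA (a ⊗ₜ h)) (πA (a' ⊗ₜ h')) = πA ((a * a') ⊗ₜ (h * h')))
    (hone : ρA 1 = πA (1 ⊗ₜ 1))
    (hρmul : ∀ a a' : A, ρA (a * a') = mulAbH (ρA a) (ρA a'))
    -- `B → A` lands in the coinvariants `A^{coH}`:
    (hB : ∀ b : B, ρA (algebraMap B A b) = πA (algebraMap B A b ⊗ₜ 1))
    -- `B`-linear incarnations of `ρ_A` and of `a ↦ π_A(a ⊗ 1_H)`:
    (ρA' : A →ₗ[B] AbH) (hρA' : ∀ a : A, ρA' a = ρA a)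
    (πA1 : A →ₗ[B] AbH) (hπA1 : ∀ a : A, πA1 a = πA (a ⊗ₜ 1))
    -- `A/B` is a partial `H`-Galois extension:
    (can : A ⊗[B] A →ₗ[B] AbH)
    (hcan : ∀ a a' : A, can (a ⊗ₜ a') = mulAbH (πA (a ⊗ₜ 1)) (ρA a'))
    (hGalois : Function.Bijective can) :
    -- purity of `ι : B → A` ⟺ `− ⊗_B A` fully faithful (unit bijective on coinvariants)
    ((∀ (P : Type u) [AddCommGroup P] [Module B P],
        Function.Injective (fun p : P => (p ⊗ₜ[B] (1 : A) : P ⊗[B] A))) ↔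
      (∀ (N : Type u) [AddCommGroup N] [Module B N],
        Set.BijOn (fun n : N => (n ⊗ₜ[B] (1 : A) : N ⊗[B] A)) Set.univ
          {ξ : N ⊗[B] A |
            LinearMap.lTensor N ρA' ξ = LinearMap.lTensor N πA1 ξ})) ∧
    -- and purity implies `B ≅ A^{coH}`
    ((∀ (P : Type u) [AddCommGroup P] [Module B P],
        Function.Injective (fun p : P => (p ⊗ₜ[B] (1 : A) : P ⊗[B] A))) →
      Set.BijOn (algebraMap B A) Set.univ
        {a : A | ρA a = πA (a ⊗ₜ 1)}) :=
  galois_fullyFaithful_iff_pure_general πA ρA mulAbH hmul hone hρmul hB ρA' hρA' πA1 hπA1 can hcan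
    hGalois
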